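/- For any untyped λ-term t, the height of the syntax tree of its full parallel reduct t* is at most the size (number of syntax-tree nodes) of t. -/
import Mathlib

/-- Untyped λ-terms with de Bruijn indices. -/
inductive Lam : Type
  | var : Nat → Lam
  | lam : Lam → Lam
  | app : Lam → Lam → Lam
deriving DecidableEq

namespace Lam

/-- Lift (shift) the free variables `≥ k` by `d`. -/
def lift (d : Nat) : Nat → Lam → Lam
  | k, var n => if n < k then var n else var (n + d)
  | k, lam t => lam (lift d (k + 1) t)
  | k, app t u => app (lift d k t) (lift d k u)

/-- Capture-avoiding substitution `t{k := u}` (de Bruijn style). -/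
def subst : Lam → Nat → Lam → Lam
  | var n, k, u => if n = k then lift k 0 u else if k < n then var (n - 1) else var n
  | lam t, k, u => lam (subst t (k + 1) u)
  | app a b, k, u => app (subst a k u) (subst b k u)

/-- Full parallel reduction `t*`. -/
def pstar : Lam → Lam
  | var n => var n
  | lam t => lam (pstar t)
  | app (lam t) u => subst (pstar t) 0 (pstar u)
  | app (var n) u => app (var n) (pstar u)
  | app (app a b) u => app (pstar (app a b)) (pstar u)

/-- Height of the syntax tree (variables have height 0). -/
def height : Lam → Nat
  | var _ => 0
  | lam t => 1 + height t
  | app t u => 1 + max (height t) (height u)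

/-- Size: number of nodes of the syntax tree. -/
def size : Lam → Nat
  | var _ => 1
  | lam t => 1 + size t
  | app t u => 1 + size t + size u

/-- Single-step β-reduction. -/
inductive Step : Lam → Lam → Prop
  | beta (t u : Lam) : Step (app (lam t) u) (subst t 0 u)
  | appL {t t' : Lam} (u : Lam) : Step t t' → Step (app t u) (app t' u)
  | appR (t : Lam) {u u' : Lam} : Step u u' → Step (app t u) (app t u')
  | lam {t t' : Lam} : Step t t' → Step (lam t) (lam t')

/-- β-convertibility. -/
def Conv : Lam → Lam → Prop := Relation.EqvGen Step

theorem height_lift (d k : Nat) (t : Lam) : (lift d k t).height = t.height := by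
  induction t generalizing k with
  | var n => simp only [lift]; split <;> rfl
  | lam t ih => simp [lift, height, ih]
  | app a b iha ihb => simp [lift, height, iha, ihb]

theorem height_subst (t : Lam) (k : Nat) (u : Lam) :
    (subst t k u).height ≤ t.height + u.height := by
  induction t generalizing k with
  | var n =>
    simp only [subst]
    split
    · simp [height_lift, height]
    · split <;> simp [height]
  | lam t ih =>
    simp only [subst, height]
    have := ih (k + 1)
    omega
  | app a b iha ihb =>
    simp only [subst, height]
    have := iha k; have := ihb k
    omega

end Lam

/-- for any untyped λ-term `t`, the height of its full parallel
reduct `t*` is at most the size of `t`. -/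
theorem height_pstar_le_size (t : Lam) : (Lam.pstar t).height ≤ t.size := by
  induction t with
  | var n => simp [Lam.pstar, Lam.height, Lam.size]
  | lam t ih => simp only [Lam.pstar, Lam.height, Lam.size]; omega
  | app a b iha ihb =>
    cases a with
    | var n => simp only [Lam.pstar, Lam.height, Lam.size] at *; omega
    | lam t =>
      simp only [Lam.pstar, Lam.height, Lam.size] at *
      have := Lam.height_subst (Lam.pstar t) 0 (Lam.pstar b)
      omega
    | app c d => simp only [Lam.pstar, Lam.height, Lam.size] at *; omega
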